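/- arXiv:1904.08823 — 4 statements merged into one kernel-verified Lean document; each statement's English description precedes it below -/
import Mathlib

section
/- In the bi-objective case (k = 2), for p points s^(1),…,s^(p) with f₁(s^(1)) ≤ … ≤ f₁(s^(p)), f₂(s^(1)) ≥ … ≥ f₂(s^(p)), and all points strictly dominating the reference point r, the hypervolume satisfies HV_r({s^(1),…,s^(p)}) = Σ_{i=1}^{p} (f₁(s^(i+1)) − f₁(s^(i)))·(r₂ − f₂(s^(i))), where f₁(s^(p+1)) := r₁. -/
noncomputable def hv {n k : ℕ} (f : (Fin n → ℝ) → Fin k → ℝ) (r : Fin k → ℝ)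
    (S : Set (Fin n → ℝ)) : ℝ :=
  (MeasureTheory.volume {z : Fin k → ℝ | ∃ y ∈ S, ∀ j, f y j < z j ∧ z j < r j}).toReal

open Function MeasureTheory Set

/-! Write `a i, b i` for the two objectives of the `i`-th point and `a p := r₀`. Up to the
null vertical lines `z₀ = a (i + 1)`, the dominated region is the disjoint union of the strips
`(a i, a (i + 1)) × (b i, r₁)`: a dominated point `z` lies in the strip of the last `i` with
`a i < z₀`, and since `b` is antitone this `b i` is the smallest one available. -/

section NextOr

variable {α : Type*} {p : ℕ}

def nextOr (a : Fin p → α) (c : α) (i : Fin p) : α :=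
  if h : (i : ℕ) + 1 < p then a ⟨i + 1, h⟩ else c

variable {a : Fin p → α} {c : α}

lemma nextOr_le [Preorder α] (hc : ∀ i, a i ≤ c) (i : Fin p) : nextOr a c i ≤ c := by
  unfold nextOr
  split_ifs
  · exact hc _
  · exact le_rfl

lemma le_nextOr [Preorder α] (ha : Monotone a) (hc : ∀ i, a i ≤ c) (i : Fin p) :
    a i ≤ nextOr a c i := by
  unfold nextOr
  split_ifs
  · exact ha (by simp [Fin.le_def])
  · exact hc i

lemma nextOr_le_of_lt [Preorder α] (ha : Monotone a) (c : α) {i j : Fin p} (hij : i < j) :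
    nextOr a c i ≤ a j := by
  rw [Fin.lt_def] at hij
  rw [nextOr, dif_pos (by omega)]
  exact ha (by rw [Fin.le_def]; exact hij)

lemma exists_le_lt_le_nextOr [LinearOrder α] {t : α} {i : Fin p} (hi : a i < t) (ht : t ≤ c) :
    ∃ m, i ≤ m ∧ a m < t ∧ t ≤ nextOr a c m := by
  obtain ⟨m, hm, hmax⟩ :=
    (Finset.univ.filter (a · < t)).exists_max_image id ⟨i, by simpa using hi⟩
  simp only [Finset.mem_filter, Finset.mem_univ, true_and, id] at hm hmax
  refine ⟨m, hmax i hi, hm, ?_⟩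
  unfold nextOr
  split_ifs with h
  · by_contra! hlt
    have := hmax ⟨m + 1, h⟩ hlt
    simp [Fin.le_def] at this
  · exact ht

lemma pairwise_disjoint_Ioo_nextOr [LinearOrder α] (ha : Monotone a) (c : α) :
    Pairwise (Disjoint on fun i => Ioo (a i) (nextOr a c i)) := by
  refine (pairwise_disjoint_on _).2 fun i j hij => Set.disjoint_left.2 fun t hti htj => ?_
  exact lt_asymm (hti.2.trans_le (nextOr_le_of_lt ha c hij)) htj.1

end NextOr

section Staircase

variable {p : ℕ} (x : Fin p → Fin 2 → ℝ) (r : Fin 2 → ℝ)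

def strip (i : Fin p) : Set (Fin 2 → ℝ) :=
  univ.pi fun j => Ioo (x i j) (![nextOr (x · 0) (r 0) i, r 1] j)

variable {x r}

lemma mem_strip {i : Fin p} {z : Fin 2 → ℝ} :
    z ∈ strip x r i ↔
      z 0 ∈ Ioo (x i 0) (nextOr (x · 0) (r 0) i) ∧ z 1 ∈ Ioo (x i 1) (r 1) := by
  simp [strip, Fin.forall_fin_two]

lemma volume_strip (i : Fin p) :
    volume (strip x r i) =
      ENNReal.ofReal (nextOr (x · 0) (r 0) i - x i 0) * ENNReal.ofReal (r 1 - x i 1) := by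
  rw [strip, Real.volume_pi_Ioo, Fin.prod_univ_two]
  rfl

lemma iUnion_strip_subset (hr : ∀ i, x i 0 ≤ r 0) :
    ⋃ i, strip x r i ⊆ ⋃ i, univ.pi fun j => Ioo (x i j) (r j) := by
  refine iUnion_mono fun i => pi_mono fun j _ => Ioo_subset_Ioo_right ?_
  fin_cases j
  · exact nextOr_le hr i
  · exact le_rfl

lemma diff_subset_iUnion_strip (hb : Antitone fun i => x i 1) :
    (⋃ i, univ.pi fun j => Ioo (x i j) (r j)) \ ⋃ i, {z | z 0 = nextOr (x · 0) (r 0) i} ⊆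
      ⋃ i, strip x r i := by
  simp only [subset_def, mem_sdiff, mem_iUnion, mem_univ_pi, Fin.forall_fin_two, mem_Ioo,
    mem_ofPred_eq, not_exists]
  rintro z ⟨⟨i, ⟨hi0, hr0⟩, hi1, hr1⟩, hz⟩
  obtain ⟨m, him, hm, hmz⟩ := exists_le_lt_le_nextOr (a := (x · 0)) hi0 hr0.le
  exact ⟨m, mem_strip.2 ⟨⟨hm, hmz.lt_of_ne (hz m)⟩, (hb him).trans_lt hi1, hr1⟩⟩

lemma pairwise_disjoint_strip (ha : Monotone fun i => x i 0) :
    Pairwise (Disjoint on fun i => strip x r i) :=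
  fun _ _ hij =>
    ((pairwise_disjoint_Ioo_nextOr ha (r 0) hij).preimage fun z : Fin 2 → ℝ => z 0).mono
      (fun _ hz => (mem_strip.1 hz).1) (fun _ hz => (mem_strip.1 hz).1)

theorem volume_staircase_toReal (ha : Monotone fun i => x i 0) (hb : Antitone fun i => x i 1)
    (hr : ∀ i j, x i j ≤ r j) :
    (volume (⋃ i, univ.pi fun j => Ioo (x i j) (r j))).toReal =
      ∑ i, (nextOr (x · 0) (r 0) i - x i 0) * (r 1 - x i 1) := by
  have hnull : volume (⋃ i, {z : Fin 2 → ℝ | z 0 = nextOr (x · 0) (r 0) i}) = 0 :=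
    measure_iUnion_null fun i => Measure.pi_hyperplane _ 0 _
  have hstrips : volume (⋃ i, univ.pi fun j => Ioo (x i j) (r j)) =
      volume (⋃ i, strip x r i) :=
    le_antisymm
      ((measure_sdiff_null hnull).symm.trans_le (measure_mono (diff_subset_iUnion_strip hb)))
      (measure_mono (iUnion_strip_subset fun i => hr i 0))
  rw [hstrips, measure_iUnion (pairwise_disjoint_strip ha)
    (fun i => MeasurableSet.univ_pi fun _ => measurableSet_Ioo), tsum_fintype]
  simp only [volume_strip]
  rw [ENNReal.toReal_sum fun _ _ => ENNReal.mul_ne_top ENNReal.ofReal_ne_top ENNReal.ofReal_ne_top]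
  refine Finset.sum_congr rfl fun i _ => ?_
  rw [ENNReal.toReal_mul, ENNReal.toReal_ofReal (sub_nonneg.2 (le_nextOr ha (fun i => hr i 0) i)),
    ENNReal.toReal_ofReal (sub_nonneg.2 (hr i 1))]

end Staircase

/-- Bi-objective hypervolume of a sorted chain of mutually non-dominated points
equals the sum of the areas of the axis-parallel rectangles. -/
theorem hv_biobjective_sum {n p : ℕ} (f : (Fin n → ℝ) → Fin 2 → ℝ) (r : Fin 2 → ℝ)
    (s : Fin p → (Fin n → ℝ))
    (h1 : ∀ i j : Fin p, i ≤ j → f (s i) 0 ≤ f (s j) 0)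
    (h2 : ∀ i j : Fin p, i ≤ j → f (s j) 1 ≤ f (s i) 1)
    (hr : ∀ i : Fin p, ∀ j, f (s i) j < r j) :
    hv f r (Set.range s) =
      ∑ i : Fin p,
        ((if h : (i : ℕ) + 1 < p then f (s ⟨(i : ℕ) + 1, h⟩) 0 else r 0) - f (s i) 0) *
          (r 1 - f (s i) 1) := by
  have hregion : {z : Fin 2 → ℝ | ∃ y ∈ range s, ∀ j, f y j < z j ∧ z j < r j} =
      ⋃ i, univ.pi fun j => Ioo (f (s i) j) (r j) := by
    ext z
    simp
  rw [hv, hregion]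
  exact volume_staircase_toReal (x := fun i => f (s i)) h1 h2 fun i j => (hr i j).le
end

section
/- If s strictly dominates the reference point componentwise (f_j(s) < r_j for all j) and no element of S weakly dominates s, then HVI_r(s, S) > 0. -/
open MeasureTheory Set

section Boxes

variable {ι : Type*}

lemma closure_biUnion_pi_Ioo_subset {α : Type*} {S : Set α} (hS : S.Finite) (l : α → ι → ℝ)
    (u : ι → ℝ) : closure (⋃ y ∈ S, univ.pi fun i => Ioo (l y i) (u i)) ⊆ ⋃ y ∈ S, Ici (l y) :=
  closure_minimal (biUnion_mono subset_rfl fun _ _ _ hz i => (hz i (mem_univ i)).1.le)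
    (hS.isClosed_biUnion fun _ _ => isClosed_Ici)

lemma left_mem_closure_pi_Ioo {l u : ι → ℝ} (h : ∀ i, l i < u i) :
    l ∈ closure (univ.pi fun i => Ioo (l i) (u i)) := by
  rw [closure_pi_set]
  intro i _
  show l i ∈ closure (Ioo (l i) (u i))
  rw [closure_Ioo (h i).ne]
  exact left_mem_Icc.2 (h i).le

variable [Fintype ι]

lemma volume_pi_Ioo_lt_top (l u : ι → ℝ) : volume (univ.pi fun i => Ioo (l i) (u i)) < ⊤ := by
  rw [Real.volume_pi_Ioo]
  exact ENNReal.prod_lt_top fun _ _ => ENNReal.ofReal_lt_top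

lemma volume_lt_volume_union_pi_Ioo {A : Set (ι → ℝ)} (hA : volume A ≠ ⊤) {l u : ι → ℝ}
    (hlu : ∀ i, l i < u i) (hl : l ∉ closure A) :
    volume A < volume (A ∪ univ.pi fun i => Ioo (l i) (u i)) := by
  set U := (closure A)ᶜ ∩ univ.pi fun i => Ioo (l i) (u i)
  have hU_open : IsOpen U :=
    isClosed_closure.isOpen_compl.inter (isOpen_set_pi finite_univ fun i _ => isOpen_Ioo)
  have hU_ne : U.Nonempty :=
    mem_closure_iff.1 (left_mem_closure_pi_Ioo hlu) _ isClosed_closure.isOpen_compl hl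
  have hAU : Disjoint A U :=
    (disjoint_compl_right.mono_left subset_closure).mono_right inter_subset_left
  calc volume A < volume A + volume U := ENNReal.lt_add_right hA (hU_open.measure_pos _ hU_ne).ne'
    _ = volume (A ∪ U) := (measure_union hAU hU_open.measurableSet).symm
    _ ≤ _ := measure_mono (union_subset_union_right _ inter_subset_right)

end Boxes

lemma hv_eq_toReal_volume_biUnion {n k : ℕ} (f : (Fin n → ℝ) → Fin k → ℝ) (r : Fin k → ℝ)
    (S : Set (Fin n → ℝ)) :
    hv f r S = (volume (⋃ y ∈ S, univ.pi fun j => Ioo (f y j) (r j))).toReal := by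
  rw [hv]
  congr 2
  ext z
  simp

theorem hvi_pos {n k : ℕ} (f : (Fin n → ℝ) → Fin k → ℝ) (r : Fin k → ℝ)
    (S : Set (Fin n → ℝ)) (hS : S.Finite) (s : Fin n → ℝ)
    (hr : ∀ j, f s j < r j) (hnd : ∀ y ∈ S, ∃ j, f s j < f y j) :
    0 < hv f r (S ∪ {s}) - hv f r S := by
  set box : (Fin n → ℝ) → Set (Fin k → ℝ) := fun y => univ.pi fun j => Ioo (f y j) (r j)
  have hSs : volume ((⋃ y ∈ S, box y) ∪ box s) ≠ ⊤ := by
    rw [← biUnion_singleton s box, ← biUnion_union]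
    exact (measure_biUnion_lt_top (hS.union (finite_singleton s)) fun y _ =>
      volume_pi_Ioo_lt_top _ _).ne
  have hS' : volume (⋃ y ∈ S, box y) ≠ ⊤ := ne_top_of_le_ne_top hSs (measure_mono subset_union_left)
  have hs : f s ∉ closure (⋃ y ∈ S, box y) := fun h => by
    obtain ⟨y, hy, hle⟩ := mem_iUnion₂.1 (closure_biUnion_pi_Ioo_subset hS f r h)
    obtain ⟨j, hj⟩ := hnd y hy
    exact (hle j).not_gt hj
  rw [hv_eq_toReal_volume_biUnion, hv_eq_toReal_volume_biUnion, sub_pos, biUnion_union,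
    biUnion_singleton]
  exact (ENNReal.toReal_lt_toReal hS' hSs).2 (volume_lt_volume_union_pi_Ioo hS' hr hs)
end

section
/- The UHVI fitness is continuous across the empirical non-dominated front in the bi-objective case: if z ∈ ℝ² lies on the boundary of the non-dominated region U_{S,r} (i.e., z is weakly but not strictly dominated by the set {f(s) : s ∈ S}), then both the hypervolume improvement of a point mapping to z and the distance d(z, ∂U_{S,r}) are zero. -/
/-- Hypervolume (in objective space, k = 2) of a set of objective vectors. -/
noncomputable def hvObj (r : Fin 2 → ℝ) (F : Set (Fin 2 → ℝ)) : ℝ :=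
  (MeasureTheory.volume {w : Fin 2 → ℝ | ∃ u ∈ F, ∀ j, u j < w j ∧ w j < r j}).toReal

/-! A point `z` weakly dominated by some `f s` adds nothing to the dominated region, since
every point strictly above `z` is already strictly above `f s`. And `z ∈ U_{S,r}` lies in the
closure of the open orthant strictly above `f s`, which is disjoint from `U_{S,r}`. -/

open Set

lemma setOf_exists_strictBox_insert_of_le {ι α : Type*} [Preorder α] {F : Set (ι → α)}
    {r u z : ι → α} (hu : u ∈ F) (huz : u ≤ z) :
    {w : ι → α | ∃ v ∈ insert z F, ∀ j, v j < w j ∧ w j < r j} =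
      {w : ι → α | ∃ v ∈ F, ∀ j, v j < w j ∧ w j < r j} := by
  ext w
  simp only [mem_ofPred_eq, exists_mem_insert]
  refine ⟨?_, Or.inr⟩
  rintro (hz | hF)
  · exact ⟨u, hu, fun j => ⟨(huz j).trans_lt (hz j).1, (hz j).2⟩⟩
  · exact hF

lemma hvObj_union_singleton_of_le {r z u : Fin 2 → ℝ} {F : Set (Fin 2 → ℝ)}
    (hu : u ∈ F) (huz : u ≤ z) : hvObj r (F ∪ {z}) = hvObj r F := by
  rw [hvObj, union_singleton, setOf_exists_strictBox_insert_of_le hu huz, hvObj]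

lemma mem_closure_setOf_forall_lt_of_le {ι α : Type*} [LinearOrder α] [TopologicalSpace α]
    [OrderTopology α] [DenselyOrdered α] [NoMaxOrder α] {u z : ι → α} (huz : u ≤ z) :
    z ∈ closure {w | ∀ j, u j < w j} := by
  have hpi : {w : ι → α | ∀ j, u j < w j} = univ.pi fun j => Ioi (u j) := by
    ext w; simp
  rw [hpi, closure_pi_set]
  simpa [closure_Ioi] using huz

theorem uhvi_continuous_on_front_general {n : ℕ} (f : (Fin n → ℝ) → Fin 2 → ℝ)
    (r : Fin 2 → ℝ) (S : Set (Fin n → ℝ))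
    (z : Fin 2 → ℝ) (hz : ∀ j, z j < r j)
    (hweak : ∃ s ∈ S, ∀ j, f s j ≤ z j)
    (hnstrict : ∀ s ∈ S, ¬ (∀ j, f s j < z j)) :
    hvObj r (f '' S ∪ {z}) - hvObj r (f '' S) = 0 ∧
      Metric.infDist z
        (frontier {w : Fin 2 → ℝ | (∀ j, w j < r j) ∧ ∀ s ∈ S, ¬ (∀ j, f s j < w j)}) = 0 := by
  obtain ⟨s, hs, hle⟩ := hweak
  refine ⟨sub_eq_zero.2 (hvObj_union_singleton_of_le (mem_image_of_mem f hs) hle), ?_⟩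
  apply Metric.infDist_zero_of_mem
  rw [frontier_eq_closure_inter_closure]
  refine ⟨subset_closure ⟨hz, hnstrict⟩, closure_mono ?_ (mem_closure_setOf_forall_lt_of_le hle)⟩
  exact fun w hw hU => hU.2 s hs hw

/-- Continuity of the UHVI fitness across the empirical non-dominated front:
on the front both the hypervolume improvement and the distance vanish. -/
theorem uhvi_continuous_on_front {n : ℕ} (f : (Fin n → ℝ) → Fin 2 → ℝ)
    (r : Fin 2 → ℝ) (S : Set (Fin n → ℝ)) (hS : S.Finite)
    (z : Fin 2 → ℝ) (hz : ∀ j, z j < r j)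
    (hweak : ∃ s ∈ S, ∀ j, f s j ≤ z j)
    (hnstrict : ∀ s ∈ S, ¬ (∀ j, f s j < z j)) :
    hvObj r (f '' S ∪ {z}) - hvObj r (f '' S) = 0 ∧
      Metric.infDist z
        (frontier {w : Fin 2 → ℝ | (∀ j, w j < r j) ∧ ∀ s ∈ S, ¬ (∀ j, f s j < w j)}) = 0 :=
  uhvi_continuous_on_front_general f r S z hz hweak hnstrict
end

section
/- In the bi-objective case, for a point z = f(s) that is strictly dominated by some element of the image f(S), the hypervolume improvement HVI_r(s, S) is zero while the Euclidean distance from z to the empirical non-dominated front ∂U_{S,r} is strictly positive (assuming z ≺ r componentwise strictly). -/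
open Metric Set

theorem hv_union_singleton_of_dominated {n k : ℕ} (f : (Fin n → ℝ) → Fin k → ℝ)
    (r : Fin k → ℝ) {S : Set (Fin n → ℝ)} {s : Fin n → ℝ}
    (hdom : ∃ y ∈ S, ∀ j, f y j ≤ f s j) :
    hv f r (S ∪ {s}) = hv f r S := by
  obtain ⟨y₀, hy₀S, hy₀⟩ := hdom
  unfold hv
  congr 2
  ext z
  simp only [mem_ofPred_eq, union_singleton, mem_insert_iff, exists_eq_or_imp]
  refine ⟨?_, Or.inr⟩
  rintro (h | h)
  · exact ⟨y₀, hy₀S, fun j => ⟨(hy₀ j).trans_lt (h j).1, (h j).2⟩⟩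
  · exact h

section NondominatedRegion

variable {α ι : Type*} (f : α → ι → ℝ) (r : ι → ℝ) (S : Set α)

def nondominatedRegion : Set (ι → ℝ) :=
  {w | (∀ j, w j < r j) ∧ ∀ y ∈ S, ¬ ∀ j, f y j < w j}

theorem nondominatedRegion_nonempty [Nonempty ι] (hS : S.Finite) :
    (nondominatedRegion f r S).Nonempty := by
  choose b hb using fun j => (hS.image (fun y => f y j)).bddBelow
  refine ⟨fun j => min (r j - 1) (b j - 1), fun j => by simp, fun y hy hlt => ?_⟩
  obtain ⟨j⟩ := ‹Nonempty ι›
  have hbj : b j ≤ f y j := hb j (mem_image_of_mem _ hy)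
  have := (hlt j).trans_le (min_le_right _ _)
  linarith

theorem not_forall_lt_of_mem_closure_nondominatedRegion [Finite ι] {y : α} (hy : y ∈ S)
    {w : ι → ℝ} (hw : w ∈ closure (nondominatedRegion f r S)) : ¬ ∀ j, f y j < w j := by
  have hopen : IsOpen {w : ι → ℝ | ∀ j, f y j < w j} := by
    simpa only [Set.pi, mem_univ, true_implies, mem_Ioi] using
      isOpen_set_pi finite_univ fun j _ => isOpen_Ioi (a := f y j)
  have hsub : nondominatedRegion f r S ⊆ {w | ∀ j, f y j < w j}ᶜ :=
    fun _ hw' => hw'.2 y hy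
  exact closure_minimal hsub hopen.isClosed_compl hw

end NondominatedRegion

theorem infDist_frontier_pos_of_notMem_closure {X : Type*} [MetricSpace X] [PreconnectedSpace X]
    {U : Set X} (hU : U.Nonempty) {x : X} (hx : x ∉ closure U) :
    0 < infDist x (frontier U) := by
  have hUuniv : U ≠ univ := fun h => hx (by simp [h])
  exact (isClosed_frontier.notMem_iff_infDist_pos (nonempty_frontier_iff.2 ⟨hU, hUuniv⟩)).1
    fun h => hx (frontier_subset_closure h)

theorem hvi_zero_dist_pos_of_strictly_dominated_general {n : ℕ}
    (f : (Fin n → ℝ) → Fin 2 → ℝ) (r : Fin 2 → ℝ)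
    (S : Set (Fin n → ℝ)) (hS : S.Finite) (s : Fin n → ℝ)
    (hdom : ∃ y ∈ S, ∀ j, f y j < f s j) :
    hv f r (S ∪ {s}) - hv f r S = 0 ∧
      0 < Metric.infDist (f s)
        (frontier {w : Fin 2 → ℝ | (∀ j, w j < r j) ∧ ∀ y ∈ S, ¬ (∀ j, f y j < w j)}) := by
  obtain ⟨y, hyS, hy⟩ := hdom
  refine ⟨sub_eq_zero.2 (hv_union_singleton_of_dominated f r ⟨y, hyS, fun j => (hy j).le⟩), ?_⟩
  exact infDist_frontier_pos_of_notMem_closure (nondominatedRegion_nonempty f r S hS)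
    fun h => not_forall_lt_of_mem_closure_nondominatedRegion f r S hyS h hy

/-- For a strictly dominated point (below the reference point) the hypervolume
improvement is zero while the distance to the empirical non-dominated front is positive. -/
theorem hvi_zero_dist_pos_of_strictly_dominated {n : ℕ}
    (f : (Fin n → ℝ) → Fin 2 → ℝ) (r : Fin 2 → ℝ)
    (S : Set (Fin n → ℝ)) (hS : S.Finite) (s : Fin n → ℝ)
    (hdom : ∃ y ∈ S, ∀ j, f y j < f s j) (hr : ∀ j, f s j < r j) :
    hv f r (S ∪ {s}) - hv f r S = 0 ∧
      0 < Metric.infDist (f s)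
        (frontier {w : Fin 2 → ℝ | (∀ j, w j < r j) ∧ ∀ y ∈ S, ¬ (∀ j, f y j < w j)}) :=
  hvi_zero_dist_pos_of_strictly_dominated_general f r S hS s hdom
end
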